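/- arXiv:1903.10734 — 7 statements merged into one kernel-verified Lean document; each statement's English description precedes it below -/
import Mathlib

section
/- The statistical unbounded order limit of a sequence in an Archimedean Riesz space is unique: if a sequence (x_n) is statistically uo-convergent to both x and y, then x = y. -/
open scoped Classical

/-- `K ⊆ ℕ` has natural density `a`. -/
def NatDensity (K : Set ℕ) (a : ℝ) : Prop :=
  Filter.Tendsto (fun n => (((Finset.range n).filter (fun k => k ∈ K)).card : ℝ) / n)
    Filter.atTop (nhds a)

/-- A set of density one is unbounded. -/
lemma natDensity_one_unbounded {K : Set ℕ} (h : NatDensity K 1) (N : ℕ) :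
    ∃ k ∈ K, N ≤ k := by
  by_contra hc
  push_neg at hc
  have hle : ∀ n : ℕ, (((Finset.range n).filter (fun k => k ∈ K)).card : ℝ) / n ≤ N / n := by
    intro n
    rcases Nat.eq_zero_or_pos n with rfl | hn
    · simp
    · have hsub : (Finset.range n).filter (fun k => k ∈ K) ⊆ Finset.range N := by
        intro k hk
        simp only [Finset.mem_filter] at hk
        exact Finset.mem_range.mpr (hc k hk.2)
      have hcard : ((Finset.range n).filter (fun k => k ∈ K)).card ≤ N := by
        simpa using Finset.card_le_card hsub
      have hn' : (0:ℝ) < n := by exact_mod_cast hn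
      exact div_le_div_of_nonneg_right (by exact_mod_cast hcard) hn'.le
  have h0 : Filter.Tendsto
      (fun n => (((Finset.range n).filter (fun k => k ∈ K)).card : ℝ) / n)
      Filter.atTop (nhds 0) := by
    refine squeeze_zero (fun n => by positivity) hle ?_
    exact tendsto_const_div_atTop_nhds_zero_nat (N : ℝ)
  exact one_ne_zero (tendsto_nhds_unique h h0)

lemma natDensity_inter {K L : Set ℕ} (hK : NatDensity K 1) (hL : NatDensity L 1) :
    NatDensity (K ∩ L) 1 := by
  have hfil : ∀ n : ℕ, @Finset.filter ℕ (fun k => k ∈ K ∩ L) (fun a => Classical.propDecidable (a ∈ K ∩ L)) (Finset.range n)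
      = ((Finset.range n).filter (fun k => k ∈ K)) ∩ ((Finset.range n).filter (fun k => k ∈ L)) := by
    intro n
    ext k
    simp only [Finset.mem_filter, Finset.mem_inter, Set.mem_inter_iff]
    tauto
  have hupper : ∀ n : ℕ,
      ((@Finset.filter ℕ (fun k => k ∈ K ∩ L) (fun a => Classical.propDecidable (a ∈ K ∩ L)) (Finset.range n)).card : ℝ) / n
        ≤ (((Finset.range n).filter (fun k => k ∈ K)).card : ℝ) / n := by
    intro n
    rcases Nat.eq_zero_or_pos n with rfl | hn
    · simp
    · have hn' : (0:ℝ) < n := by exact_mod_cast hn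
      refine div_le_div_of_nonneg_right ?_ hn'.le
      have hs : @Finset.filter ℕ (fun k => k ∈ K ∩ L) (fun a => Classical.propDecidable (a ∈ K ∩ L)) (Finset.range n)
          ⊆ (Finset.range n).filter (fun k => k ∈ K) := by
        rw [hfil n]; exact Finset.inter_subset_left
      exact_mod_cast Finset.card_le_card hs
  have hlower : ∀ n : ℕ, 1 ≤ n →
      (((Finset.range n).filter (fun k => k ∈ K)).card : ℝ) / n
        + (((Finset.range n).filter (fun k => k ∈ L)).card : ℝ) / n - 1
        ≤ ((@Finset.filter ℕ (fun k => k ∈ K ∩ L) (fun a => Classical.propDecidable (a ∈ K ∩ L)) (Finset.range n)).card : ℝ) / n := by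
    intro n hn
    set A := (Finset.range n).filter (fun k => k ∈ K) with hA
    set B := (Finset.range n).filter (fun k => k ∈ L) with hB
    have hcard : (A ∩ B).card + (A ∪ B).card = A.card + B.card :=
      Finset.card_inter_add_card_union A B
    have hun : (A ∪ B).card ≤ n := by
      have hsub : A ∪ B ⊆ Finset.range n := by
        apply Finset.union_subset <;> exact Finset.filter_subset _ _
      simpa using Finset.card_le_card hsub
    have hineq : (A.card : ℝ) + B.card - n ≤ ((A ∩ B).card : ℝ) := by
      have h1 : ((A ∩ B).card : ℝ) + (A ∪ B).card = (A.card : ℝ) + B.card := by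
        exact_mod_cast hcard
      have h2 : ((A ∪ B).card : ℝ) ≤ n := by exact_mod_cast hun
      linarith
    have hn' : (0:ℝ) < n := by exact_mod_cast hn
    rw [hfil n, ← hA, ← hB]
    have heq : (A.card : ℝ) / n + (B.card : ℝ) / n - 1 = ((A.card : ℝ) + B.card - n) / n := by
      field_simp
    rw [heq]
    exact div_le_div_of_nonneg_right hineq hn'.le
  have hlim : Filter.Tendsto
      (fun n : ℕ => (((Finset.range n).filter (fun k => k ∈ K)).card : ℝ) / n
        + (((Finset.range n).filter (fun k => k ∈ L)).card : ℝ) / n - 1)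
      Filter.atTop (nhds 1) := by
    have h := (hK.add hL).sub (tendsto_const_nhds (x := (1:ℝ)))
    norm_num at h
    exact h
  refine tendsto_of_tendsto_of_tendsto_of_le_of_le' hlim hK ?_ ?_
  · filter_upwards [Filter.eventually_ge_atTop 1] with n hn using hlower n hn
  · filter_upwards with n using hupper n

lemma natDensity_compl {K : Set ℕ} (h : NatDensity K 0) : NatDensity Kᶜ 1 := by
  have hfil : ∀ n : ℕ, (@Finset.filter ℕ (fun k => k ∈ Kᶜ) (fun a => Classical.propDecidable (a ∈ Kᶜ)) (Finset.range n)).card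
      = n - ((Finset.range n).filter (fun k => k ∈ K)).card := by
    intro n
    have heq : @Finset.filter ℕ (fun k => k ∈ Kᶜ) (fun a => Classical.propDecidable (a ∈ Kᶜ)) (Finset.range n)
        = (Finset.range n).filter (fun k => ¬ k ∈ K) := by
      ext k; simp
    have h2 := Finset.card_filter_add_card_filter_not
      (s := Finset.range n) (p := fun k => k ∈ K)
    simp only [Finset.card_range] at h2
    rw [heq]
    omega
  have hcle : ∀ n : ℕ, ((Finset.range n).filter (fun k => k ∈ K)).card ≤ n := by
    intro n
    simpa using Finset.card_le_card (Finset.filter_subset (fun k => k ∈ K) (Finset.range n))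
  have hev : ∀ n : ℕ, 1 ≤ n →
      ((@Finset.filter ℕ (fun k => k ∈ Kᶜ) (fun a => Classical.propDecidable (a ∈ Kᶜ)) (Finset.range n)).card : ℝ) / n
        = 1 - (((Finset.range n).filter (fun k => k ∈ K)).card : ℝ) / n := by
    intro n hn
    have hn' : (0:ℝ) < n := by exact_mod_cast hn
    rw [hfil n, Nat.cast_sub (hcle n)]
    field_simp
  have hlim : Filter.Tendsto
      (fun n : ℕ => 1 - (((Finset.range n).filter (fun k => k ∈ K)).card : ℝ) / n)
      Filter.atTop (nhds 1) := by
    have h1 := (tendsto_const_nhds (x := (1:ℝ)) (f := Filter.atTop (α := ℕ))).sub h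
    norm_num at h1
    exact h1
  refine Filter.Tendsto.congr' ?_ hlim
  filter_upwards [Filter.eventually_ge_atTop 1] with n hn
  exact (hev n hn).symm


variable {E : Type*} [Lattice E] [AddCommGroup E]
  [CovariantClass E E (· + ·) (· ≤ ·)] [Module ℝ E] [PosSMulMono ℝ E]

lemma le_inf_add_inf {f g u : E} (hf : 0 ≤ f) (hg : 0 ≤ g) (hu : 0 ≤ u)
    (hfg : u ≤ f + g) : u ≤ f ⊓ u + g ⊓ u := by
  have hsum : f ⊓ u + g ⊓ u = ((f + g) ⊓ (f + u)) ⊓ ((u + g) ⊓ (u + u)) := by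
    rw [inf_add, add_inf, add_inf]
  rw [hsum]
  refine le_inf (le_inf hfg (le_add_of_nonneg_left hf)) (le_inf ?_ ?_)
  · exact le_add_of_nonneg_right hg
  · exact le_add_of_nonneg_left hu

/-- `p` is statistically monotone decreasing to `0`: it decreases along a set of
density one and its infimum over that set is `0`. -/
def StatDecrZero (p : ℕ → E) : Prop :=
  ∃ K : Set ℕ, NatDensity K 1 ∧ (∀ j ∈ K, ∀ k ∈ K, j ≤ k → p k ≤ p j) ∧ IsGLB (p '' K) 0

/-- `x` statistically order converges to `l`. -/
def StatOrderConv (x : ℕ → E) (l : E) : Prop :=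
  ∃ p : ℕ → E, StatDecrZero p ∧ NatDensity {n | ¬ |x n - l| ≤ p n} 0

/-- `x` statistically unbounded order converges to `l`. -/
def StatUOConv (x : ℕ → E) (l : E) : Prop :=
  ∀ u : E, 0 ≤ u → StatOrderConv (fun n => |x n - l| ⊓ u) 0

/-- a (nonnegative) sequence order converges to `0`: it is dominated by a sequence
decreasing to `0`. -/
def OrderConvZero (q : ℕ → E) : Prop :=
  ∃ p : ℕ → E, Antitone p ∧ IsGLB (Set.range p) 0 ∧ ∀ n, q n ≤ p n

/-- `x` is unbounded order convergent to `l`. -/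
def UOConv (x : ℕ → E) (l : E) : Prop :=
  ∀ u : E, 0 ≤ u → OrderConvZero (fun n => |x n - l| ⊓ u)

set_option maxHeartbeats 1000000 in
/-- The statistical uo-limit of a sequence in an Archimedean Riesz space is unique. -/
theorem stuo_limit_unique
    (harch : ∀ v w : E, (∀ n : ℕ, n • v ≤ w) → v ≤ 0)
    (x : ℕ → E) (a b : E)
    (ha : StatUOConv x a) (hb : StatUOConv x b) : a = b := by
  set u := |a - b| with hu
  obtain ⟨p, ⟨K₁, hK₁d, hK₁m, hK₁g⟩, hE₁⟩ := ha u (abs_nonneg _)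
  obtain ⟨q, ⟨K₂, hK₂d, hK₂m, hK₂g⟩, hE₂⟩ := hb u (abs_nonneg _)
  set S : Set ℕ := (K₁ ∩ K₂) ∩ ({n | ¬ |(|x n - a| ⊓ u) - 0| ≤ p n}ᶜ ∩
    {n | ¬ |(|x n - b| ⊓ u) - 0| ≤ q n}ᶜ) with hS
  have hSd : NatDensity S 1 :=
    natDensity_inter (natDensity_inter hK₁d hK₂d)
      (natDensity_inter (natDensity_compl hE₁) (natDensity_compl hE₂))
  have hSub : ∀ N : ℕ, ∃ k ∈ S, N ≤ k := natDensity_one_unbounded hSd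
  -- key estimate on S
  have hkey : ∀ n ∈ S, u ≤ p n + q n := by
    intro n hn
    have hpa : |x n - a| ⊓ u ≤ p n := by
      have h1 : n ∈ {n | ¬ |(|x n - a| ⊓ u) - 0| ≤ p n}ᶜ := hn.2.1
      simp only [Set.mem_compl_iff, Set.mem_setOf_eq, not_not, sub_zero] at h1
      calc |x n - a| ⊓ u ≤ |(|x n - a| ⊓ u)| := le_abs_self _
        _ ≤ p n := h1
    have hqb : |x n - b| ⊓ u ≤ q n := by
      have h1 : n ∈ {n | ¬ |(|x n - b| ⊓ u) - 0| ≤ q n}ᶜ := hn.2.2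
      simp only [Set.mem_compl_iff, Set.mem_setOf_eq, not_not, sub_zero] at h1
      calc |x n - b| ⊓ u ≤ |(|x n - b| ⊓ u)| := le_abs_self _
        _ ≤ q n := h1
    have hfg : u ≤ |x n - a| + |x n - b| := by
      have heq : a - b = (x n - b) - (x n - a) := by abel
      calc u = |(x n - b) - (x n - a)| := by rw [hu, heq]
        _ = |(x n - b) + -(x n - a)| := by rw [sub_eq_add_neg]
        _ ≤ |x n - b| + |(-(x n - a))| := abs_add_le _ _
        _ = |x n - a| + |x n - b| := by rw [abs_neg, add_comm]
    calc u ≤ |x n - a| ⊓ u + |x n - b| ⊓ u :=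
        le_inf_add_inf (abs_nonneg _) (abs_nonneg _) (abs_nonneg _) hfg
      _ ≤ p n + q n := add_le_add hpa hqb
  -- u ≤ p j for all j ∈ S
  have hup : ∀ j ∈ S, u ≤ p j := by
    intro j hj
    have hlb : u - p j ∈ lowerBounds (q '' K₂) := by
      rintro z ⟨k₂, hk₂, rfl⟩
      obtain ⟨k, hkS, hk⟩ := hSub (max j k₂)
      have h1 : q k ≤ q k₂ := hK₂m k₂ hk₂ k hkS.1.2 (le_trans (le_max_right _ _) hk)
      have h2 : p k ≤ p j := hK₁m j hj.1.1 k hkS.1.1 (le_trans (le_max_left _ _) hk)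
      have h3 : u ≤ p j + q k₂ :=
        le_trans (hkey k hkS) (add_le_add h2 h1)
      exact sub_le_iff_le_add'.mpr h3
    exact sub_nonpos.mp (hK₂g.2 hlb)
  have hub : u ≤ 0 := by
    apply hK₁g.2
    rintro z ⟨j₁, hj₁, rfl⟩
    obtain ⟨j, hjS, hj⟩ := hSub j₁
    exact le_trans (hup j hjS) (hK₁m j₁ hj₁ j hjS.1.1 hj)
  have hu0 : |a - b| = 0 := le_antisymm hub (abs_nonneg _)
  have h1 : a - b ≤ 0 := hu0 ▸ le_abs_self (a - b)
  have h2 : (0:E) ≤ a - b := by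
    have h3 := neg_le_abs (a - b)
    rw [hu0] at h3
    exact neg_nonpos.mp h3
  exact sub_eq_zero.mp (le_antisymm h1 h2)
end

section
/- Statistical uo-convergence preserves disjointness: if x_n →^{st-uo} x in an Archimedean Riesz space and the set {n : |x_n| ∧ |y| ≠ 0} has natural density zero, then x ⊥ y (i.e., |x| ∧ |y| = 0). -/
open scoped Classical

lemma density_inter_infinite {K A B : Set ℕ} (hK : NatDensity K 1)
    (hA : NatDensity A 0) (hB : NatDensity B 0) :
    {n | n ∈ K ∧ n ∉ A ∧ n ∉ B}.Infinite := by
  by_contra h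
  rw [Set.not_infinite] at h
  set c := h.toFinset.card
  have key : ∀ n : ℕ, (((Finset.range n).filter (fun k => k ∈ K)).card : ℝ) ≤
      ((Finset.range n).filter (fun k => k ∈ A)).card +
      ((Finset.range n).filter (fun k => k ∈ B)).card + c := by
    intro n
    have hsub : (Finset.range n).filter (fun k => k ∈ K) ⊆
        (((Finset.range n).filter (fun k => k ∈ A)) ∪
         ((Finset.range n).filter (fun k => k ∈ B))) ∪ h.toFinset := by
      intro k hk
      simp only [Finset.mem_filter, Finset.mem_range] at hk
      by_cases hkA : k ∈ A
      · simp [Finset.mem_union, Finset.mem_filter, hk.1, hkA]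
      by_cases hkB : k ∈ B
      · simp [Finset.mem_union, Finset.mem_filter, hk.1, hkB]
      · simp only [Finset.mem_union, Set.Finite.mem_toFinset]
        right; exact ⟨hk.2, hkA, hkB⟩
    have h1 := Finset.card_le_card hsub
    have h2 := le_trans h1 (le_trans (Finset.card_union_le _ _)
      (add_le_add_left (Finset.card_union_le _ _) _))
    exact_mod_cast h2
  have hle : ∀ᶠ n : ℕ in Filter.atTop,
      (((Finset.range n).filter (fun k => k ∈ K)).card : ℝ) / n ≤
      ((Finset.range n).filter (fun k => k ∈ A)).card / n +
      ((Finset.range n).filter (fun k => k ∈ B)).card / n + c / n := by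
    filter_upwards [Filter.eventually_ge_atTop 1] with n hn
    rw [← add_div, ← add_div]
    apply div_le_div_of_nonneg_right (key n)
    positivity
  have hrhs : Filter.Tendsto (fun n : ℕ =>
      (((Finset.range n).filter (fun k => k ∈ A)).card : ℝ) / n +
      ((Finset.range n).filter (fun k => k ∈ B)).card / n + (c : ℝ) / n)
      Filter.atTop (nhds 0) := by
    have h3 : Filter.Tendsto (fun n : ℕ => (c : ℝ) / n) Filter.atTop (nhds 0) :=
      tendsto_const_div_atTop_nhds_zero_nat (c : ℝ)
    simpa using (hA.add hB).add h3
  have : (1 : ℝ) ≤ 0 := le_of_tendsto_of_tendsto hK hrhs hle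
  linarith

variable {E : Type*} [Lattice E] [AddCommGroup E]
  [CovariantClass E E (· + ·) (· ≤ ·)] [Module ℝ E] [PosSMulMono ℝ E]

lemma inf_add_split {a b c : E} (ha : 0 ≤ a) (hb : 0 ≤ b) (hc : 0 ≤ c) :
    (a + b) ⊓ c ≤ a ⊓ c + b ⊓ c := by
  rw [add_inf, inf_add, inf_add]
  refine le_inf (le_inf inf_le_left ?_) (le_inf ?_ ?_)
  · exact inf_le_right.trans (le_add_of_nonneg_right hb)
  · exact inf_le_right.trans (le_add_of_nonneg_left ha)
  · exact inf_le_right.trans (le_add_of_nonneg_left hc)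

/-- Statistical uo-convergence preserves disjointness in an Archimedean Riesz space. -/
theorem stuo_disjoint
    (harch : ∀ v w : E, (∀ n : ℕ, n • v ≤ w) → v ≤ 0)
    (x : ℕ → E) (l y : E)
    (hx : StatUOConv x l)
    (hd : NatDensity {n | |x n| ⊓ |y| ≠ 0} 0) :
    |l| ⊓ |y| = 0 := by
  obtain ⟨p, ⟨K, hK1, hKmono, hKglb⟩, hexc⟩ := hx |y| (abs_nonneg y)
  have hS := density_inter_infinite hK1 hexc hd
  have hz_nonneg : 0 ≤ |l| ⊓ |y| := le_inf (abs_nonneg l) (abs_nonneg y)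
  have hlb : |l| ⊓ |y| ∈ lowerBounds (p '' K) := by
    rintro _ ⟨k, hk, rfl⟩
    obtain ⟨n, hn, hkn⟩ := hS.exists_gt k
    obtain ⟨hnK, hnA, hnB⟩ := hn
    have h1 : |x n - l| ⊓ |y| ≤ p n := by
      by_contra hcon
      apply hnA
      simp only [Set.mem_setOf_eq, sub_zero]
      rw [abs_of_nonneg (le_inf (abs_nonneg _) (abs_nonneg _))]
      exact hcon
    have h2 : |x n| ⊓ |y| = 0 := by
      by_contra hcon; exact hnB hcon
    have habs : |l| ≤ |x n - l| + |x n| := by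
      have h : l = (l - x n) + x n := by abel
      nth_rewrite 1 [h]
      calc |(l - x n) + x n| ≤ |l - x n| + |x n| := abs_add_le _ _
        _ = |x n - l| + |x n| := by rw [abs_sub_comm]
    have hsplit : |l| ⊓ |y| ≤ (|x n - l| ⊓ |y|) + (|x n| ⊓ |y|) :=
      le_trans (inf_le_inf_right _ habs)
        (inf_add_split (abs_nonneg _) (abs_nonneg _) (abs_nonneg _))
    calc |l| ⊓ |y| ≤ (|x n - l| ⊓ |y|) + (|x n| ⊓ |y|) := hsplit
      _ = |x n - l| ⊓ |y| := by rw [h2, add_zero]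
      _ ≤ p n := h1
      _ ≤ p k := hKmono k hk n hnK (le_of_lt hkn)
  exact le_antisymm (hKglb.2 hlb) hz_nonneg
end

section
/- In ℓ_p (1 ≤ p < ∞), the sequence defined by x_n = Σ_{i=1}^{k} e_{i²} when n = k² and x_n = e_n otherwise (where (e_n) is the standard basis) is statistically unbounded order convergent to 0, but the subsequence (x_{k²}) is not uo-convergent to 0. -/
open scoped Classical

open scoped ENNReal

/-- Pointwise order on `ℓ^p` (which is the lattice order of `ℓ^p`). -/
def lpLE {p : ℝ≥0∞} (f g : lp (fun _ : ℕ => ℝ) p) : Prop := ∀ i, f i ≤ g i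

/-- A pointwise-defined nonnegative sequence `q` of elements (given coordinatewise)
statistically order converges to `0` in `ℓ^p`: it is dominated, for almost all `n`,
by a sequence in `ℓ^p` which decreases along a set of density one with infimum `0`
in `ℓ^p`. -/
def lpStatOrderConvZero (p : ℝ≥0∞) (q : ℕ → ℕ → ℝ) : Prop :=
  ∃ P : ℕ → lp (fun _ : ℕ => ℝ) p,
    (∃ K : Set ℕ, NatDensity K 1 ∧
      (∀ j ∈ K, ∀ k ∈ K, j ≤ k → lpLE (P k) (P j)) ∧
      (∀ k ∈ K, lpLE 0 (P k)) ∧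
      (∀ w : lp (fun _ : ℕ => ℝ) p, (∀ k ∈ K, lpLE w (P k)) → lpLE w 0)) ∧
    NatDensity {n | ¬ ∀ i, q n i ≤ P n i} 0

/-- statistical unbounded order convergence to `0` in `ℓ^p`. -/
def lpStatUONull (p : ℝ≥0∞) (x : ℕ → lp (fun _ : ℕ => ℝ) p) : Prop :=
  ∀ u : lp (fun _ : ℕ => ℝ) p, lpLE 0 u →
    lpStatOrderConvZero p (fun n i => |x n i| ⊓ u i)

/-- order convergence to `0` in `ℓ^p` of a pointwise-defined nonnegative sequence. -/
def lpOrderConvZero (p : ℝ≥0∞) (q : ℕ → ℕ → ℝ) : Prop :=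
  ∃ P : ℕ → lp (fun _ : ℕ => ℝ) p,
    (∀ j k, j ≤ k → lpLE (P k) (P j)) ∧ (∀ k, lpLE 0 (P k)) ∧
    (∀ w : lp (fun _ : ℕ => ℝ) p, (∀ k, lpLE w (P k)) → lpLE w 0) ∧
    ∀ n i, q n i ≤ P n i

/-- unbounded order convergence to `0` in `ℓ^p`. -/
def lpUONull (p : ℝ≥0∞) (x : ℕ → lp (fun _ : ℕ => ℝ) p) : Prop :=
  ∀ u : lp (fun _ : ℕ => ℝ) p, lpLE 0 u →
    lpOrderConvZero p (fun n i => |x n i| ⊓ u i)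

/-- The sequence `x_n = Σ_{i=1}^k e_{i²}` if `n = k²`, and `x_n = e_n` otherwise. -/
noncomputable def xseq (p : ℝ≥0∞) (n : ℕ) : lp (fun _ : ℕ => ℝ) p :=
  if IsSquare n then ∑ i ∈ Finset.Icc 1 n.sqrt, lp.single p (i ^ 2) 1
  else lp.single p n 1


section Aux

open Filter

lemma aux_sqrt_tendsto : Tendsto Nat.sqrt atTop atTop := by
  refine tendsto_atTop_atTop.2 fun b => ⟨b * b, fun a ha => ?_⟩
  calc b = Nat.sqrt (b * b) := (Nat.sqrt_eq b).symm
    _ ≤ Nat.sqrt a := Nat.sqrt_le_sqrt ha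

lemma aux_tendsto_sqrt_div :
    Tendsto (fun n : ℕ => ((Nat.sqrt n : ℝ) + 1) / n) atTop (nhds 0) := by
  have h2 : Tendsto (fun n : ℕ => 2 / ((Nat.sqrt n : ℝ))) atTop (nhds 0) :=
    (tendsto_const_div_atTop_nhds_zero_nat 2).comp aux_sqrt_tendsto
  refine squeeze_zero' ?_ ?_ h2
  · filter_upwards [eventually_ge_atTop 0] with n _
    positivity
  · filter_upwards [eventually_ge_atTop 1] with n hn
    have hs : 1 ≤ Nat.sqrt n := Nat.sqrt_pos.2 hn
    have hss : Nat.sqrt n * Nat.sqrt n ≤ n := Nat.sqrt_le n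
    have h1 : (1 : ℝ) ≤ (Nat.sqrt n : ℝ) := by exact_mod_cast hs
    have h2' : ((Nat.sqrt n : ℝ)) * (Nat.sqrt n) ≤ n := by exact_mod_cast hss
    have hn0 : (0 : ℝ) < n := by positivity
    rw [div_le_div_iff₀ hn0 (by linarith)]
    nlinarith

lemma aux_card_sq (n : ℕ) {inst : DecidablePred fun k => k ∈ {m : ℕ | IsSquare m}} :
    (@Finset.filter ℕ (fun k => k ∈ {m : ℕ | IsSquare m}) inst (Finset.range n)).card
      ≤ Nat.sqrt n + 1 := by
  have h := Finset.card_le_card_of_injOn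
      (s := @Finset.filter ℕ (fun k => k ∈ {m : ℕ | IsSquare m}) inst (Finset.range n))
      (t := Finset.range (Nat.sqrt n + 1)) Nat.sqrt
      (fun a ha => by
        rw [Finset.mem_coe, Finset.mem_filter, Finset.mem_range] at ha
        rw [Finset.mem_coe, Finset.mem_range, Nat.lt_succ_iff]
        exact Nat.sqrt_le_sqrt ha.1.le)
      (fun a ha b hb hab => by
        simp only [Finset.coe_filter, Set.mem_setOf_eq, Finset.mem_range] at ha hb
        obtain ⟨r, hr⟩ := ha.2
        obtain ⟨t, ht⟩ := hb.2
        subst hr; subst ht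
        rw [Nat.sqrt_eq, Nat.sqrt_eq] at hab
        rw [hab])
  simpa using h

lemma aux_density_sq : NatDensity {m : ℕ | IsSquare m} 0 := by
  unfold NatDensity
  refine squeeze_zero (fun n => by positivity) (fun n => ?_) aux_tendsto_sqrt_div
  rcases Nat.eq_zero_or_pos n with rfl | hn
  · simp
  · have hn0 : (0 : ℝ) < n := by exact_mod_cast hn
    rw [div_le_div_iff_of_pos_right hn0]
    exact_mod_cast aux_card_sq n

lemma aux_density_subset_zero {S T : Set ℕ} (h : S ⊆ T) (hT : NatDensity T 0) :
    NatDensity S 0 := by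
  unfold NatDensity at hT ⊢
  refine squeeze_zero (fun n => by positivity) (fun n => ?_) hT
  rcases Nat.eq_zero_or_pos n with rfl | hn
  · simp
  · have hn0 : (0 : ℝ) < n := by exact_mod_cast hn
    rw [div_le_div_iff_of_pos_right hn0]
    exact_mod_cast Finset.card_le_card
      (Finset.monotone_filter_right _ (fun x _ hx => h hx))

lemma aux_filter_irrel {α : Type*} (p : α → Prop) {i1 i2 : DecidablePred p} (s : Finset α) :
    @Finset.filter α p i1 s = @Finset.filter α p i2 s := by
  congr!

lemma aux_card_split (n : ℕ)
    {i1 : DecidablePred fun k => k ∈ {m : ℕ | ¬ IsSquare m}}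
    {i2 : DecidablePred fun k => k ∈ {m : ℕ | IsSquare m}} :
    (@Finset.filter ℕ (fun k => k ∈ {m : ℕ | ¬ IsSquare m}) i1 (Finset.range n)).card
      + (@Finset.filter ℕ (fun k => k ∈ {m : ℕ | IsSquare m}) i2 (Finset.range n)).card = n := by
  have h1 : (@Finset.filter ℕ (fun k => k ∈ {m : ℕ | ¬ IsSquare m}) i1 (Finset.range n))
      = (Finset.range n) \ (@Finset.filter ℕ (fun k => k ∈ {m : ℕ | IsSquare m}) i2
          (Finset.range n)) := by
    ext a
    simp only [Finset.mem_filter, Finset.mem_sdiff, Finset.mem_range, Set.mem_setOf_eq]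
    tauto
  rw [h1, Finset.card_sdiff_of_subset (Finset.filter_subset _ _)]
  have h2 : (@Finset.filter ℕ (fun k => k ∈ {m : ℕ | IsSquare m}) i2 (Finset.range n)).card
      ≤ n := by
    simpa using Finset.card_le_card
      (Finset.filter_subset (fun k => k ∈ {m : ℕ | IsSquare m}) (Finset.range n))
  rw [Finset.card_range]
  omega

lemma aux_density_nonsq : NatDensity {m : ℕ | ¬ IsSquare m} 1 := by
  unfold NatDensity
  have hsq := aux_density_sq
  unfold NatDensity at hsq
  have ha : Filter.Tendsto (fun n : ℕ => (n : ℝ) / n) Filter.atTop (nhds 1) := by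
    refine Filter.Tendsto.congr' ?_ tendsto_const_nhds
    filter_upwards [Filter.eventually_gt_atTop 0] with n hn
    have hne : (n : ℝ) ≠ 0 := by positivity
    rw [div_self hne]
  have hmain := ha.sub hsq
  rw [sub_zero] at hmain
  refine hmain.congr fun n => ?_
  have h := aux_card_split n (i1 := fun a => Classical.propDecidable _)
    (i2 := fun a => Classical.propDecidable _)
  have hr := congrArg (fun m : ℕ => (m : ℝ)) h
  push_cast at hr
  rw [div_sub_div_same]
  congr 1
  linarith

lemma aux_memlp_tail (p : ℝ≥0∞) [Fact (1 ≤ p)] (hp : p < ⊤)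
    (u : lp (fun _ : ℕ => ℝ) p) (n : ℕ) :
    Memℓp (fun i => if n ≤ i then u i else 0) p := by
  have h1 : (1 : ℝ≥0∞) ≤ p := Fact.out
  have hpt : 0 < p.toReal :=
    ENNReal.toReal_pos (by intro h; rw [h] at h1; simp at h1) hp.ne
  apply memℓp_gen
  refine Summable.of_nonneg_of_le (fun i => ?_) (fun i => ?_)
    ((lp.memℓp u).summable hpt)
  · positivity
  · refine Real.rpow_le_rpow (norm_nonneg _) ?_ hpt.le
    split_ifs with h
    · exact le_rfl
    · simp

lemma aux_nonsq (i : ℕ) : ¬ IsSquare ((i + 1) ^ 2 + 1) := by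
  rintro ⟨r, hr⟩
  have h1 : Nat.sqrt ((i + 1) ^ 2 + 1) = i + 1 := Nat.sqrt_add_eq' (i + 1) (by omega)
  have h2 : Nat.sqrt ((i + 1) ^ 2 + 1) = r := by rw [hr, Nat.sqrt_eq]
  rw [h2] at h1
  subst h1
  rw [pow_two] at hr
  exact Nat.succ_ne_self _ hr

end Aux

/-- In `ℓ^p` (`1 ≤ p < ∞`), `(x_n)` is st-uo-null but the subsequence `(x_{k²})`
is not uo-null. -/
theorem lp_stuo_subseq_counterexample (p : ℝ≥0∞) [Fact (1 ≤ p)] (hp : p < ∞) :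
    lpStatUONull p (xseq p) ∧ ¬ lpUONull p (fun k => xseq p (k ^ 2)) := by
  have h1p : (1 : ℝ≥0∞) ≤ p := Fact.out
  constructor
  · intro u hu
    have hu' : ∀ i, (0 : ℝ) ≤ u i := fun i => hu i
    refine ⟨fun n => ⟨fun i => if n ≤ i then u i else 0, aux_memlp_tail p hp u n⟩,
      ⟨{m : ℕ | ¬ IsSquare m}, aux_density_nonsq, ?_, ?_, ?_⟩, ?_⟩
    · intro j _ k _ hjk i
      show (if k ≤ i then u i else 0) ≤ (if j ≤ i then u i else 0)
      split_ifs with h1 h2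
      · exact le_refl _
      · exact absurd (hjk.trans h1) h2
      · exact hu' i
      · exact le_refl _
    · intro k _ i
      show (0 : ℝ) ≤ if k ≤ i then u i else 0
      split_ifs with h
      · exact hu' i
      · exact le_refl _
    · intro w hw i
      have hk : ((i + 1) ^ 2 + 1) ∈ {m : ℕ | ¬ IsSquare m} := aux_nonsq i
      have h2 : w i ≤ if (i + 1) ^ 2 + 1 ≤ i then u i else 0 := hw _ hk i
      have hii : ¬ ((i + 1) ^ 2 + 1 ≤ i) := by
        intro hcon
        have h3 : i + 1 ≤ (i + 1) * (i + 1) := Nat.le_mul_self (i + 1)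
        rw [pow_two] at hcon
        omega
      rw [if_neg hii] at h2
      show w i ≤ (0 : ℝ)
      exact h2
    · refine aux_density_subset_zero (T := {m : ℕ | IsSquare m}) ?_ aux_density_sq
      intro n hn
      by_contra hnsq
      simp only [Set.mem_setOf_eq] at hnsq
      refine hn (fun i => ?_)
      have hx : xseq p n = lp.single p n 1 := by rw [xseq, if_neg hnsq]
      show |xseq p n i| ⊓ u i ≤ if n ≤ i then u i else 0
      rcases eq_or_ne i n with rfl | hne
      · rw [hx, lp.single_apply_self, if_pos le_rfl]
        exact inf_le_right
      · rw [hx, lp.single_apply_ne p n 1 hne, abs_zero]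
        have h0 : (0 : ℝ) ⊓ u i = 0 := inf_eq_left.2 (hu' i)
        rw [h0]
        split_ifs with h
        · exact hu' i
        · exact le_refl _
  · intro h
    have hu : lpLE 0 (lp.single p 1 (1 : ℝ)) := by
      intro i
      have h0 : (0 : lp (fun _ : ℕ => ℝ) p) i = 0 := rfl
      rw [h0]
      rcases eq_or_ne i 1 with rfl | hne
      · rw [lp.single_apply_self]
        norm_num
      · rw [lp.single_apply_ne p 1 _ hne]
    obtain ⟨P, hdec, hpos, hinf, hdom⟩ := h (lp.single p 1 1) hu
    have hc : ∀ k : ℕ, 1 ≤ k → xseq p (k ^ 2) 1 = 1 := by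
      intro k hk
      have hsq : IsSquare (k ^ 2) := ⟨k, pow_two k⟩
      rw [xseq, if_pos hsq, Nat.sqrt_eq' k, lp.coeFn_sum, Finset.sum_apply,
        Finset.sum_eq_single_of_mem 1 (Finset.mem_Icc.2 ⟨le_rfl, hk⟩)]
      · rw [one_pow]
        exact lp.single_apply_self (E := fun _ : ℕ => ℝ) p 1 1
      · intro b _ hb1
        refine lp.single_apply_ne (E := fun _ : ℕ => ℝ) p _ _ (fun hh => hb1 ?_)
        have hb2 : b ^ 2 = 1 := hh.symm
        exact (pow_eq_one_iff.1 hb2).resolve_right two_ne_zero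
    have h1le : ∀ k, 1 ≤ k → (1 : ℝ) ≤ P k 1 := by
      intro k hk
      have hd := hdom k 1
      simp only at hd
      rw [hc k hk, lp.single_apply_self] at hd
      simpa using hd
    have hwle : ∀ k, lpLE (lp.single p 1 (1 : ℝ)) (P k) := by
      intro k i
      rcases eq_or_ne i 1 with rfl | hne
      · rw [lp.single_apply_self]
        calc (1 : ℝ) ≤ P (max k 1) 1 := h1le _ (le_max_right k 1)
          _ ≤ P k 1 := hdec k (max k 1) (le_max_left k 1) 1
      · rw [lp.single_apply_ne p 1 _ hne]
        exact hpos k i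
    have hfin := hinf _ hwle 1
    rw [lp.single_apply_self] at hfin
    have : (0 : lp (fun _ : ℕ => ℝ) p) 1 = 0 := rfl
    rw [this] at hfin
    norm_num at hfin
end

section
/- For a monotone sequence (x_n) in a Riesz space E, uo-convergence to x is equivalent to statistical uo-convergence to x. -/
open scoped Classical

variable {E : Type*} [Lattice E] [AddCommGroup E]
  [CovariantClass E E (· + ·) (· ≤ ·)] [Module ℝ E] [PosSMulMono ℝ E]

private lemma natDensity_univ' : NatDensity (Set.univ : Set ℕ) 1 := by
  refine Filter.Tendsto.congr' ?_ tendsto_const_nhds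
  filter_upwards [Filter.eventually_ge_atTop 1] with n hn
  have hn' : (n : ℝ) ≠ 0 := by exact_mod_cast Nat.one_le_iff_ne_zero.mp hn
  simp [Finset.filter_true_of_mem, div_self hn']

private lemma natDensity_empty' : NatDensity (∅ : Set ℕ) 0 := by
  have h : ∀ n : ℕ,
      (((Finset.range n).filter (fun k => k ∈ (∅ : Set ℕ))).card : ℝ) / n = 0 := by
    intro n; simp
  simpa [NatDensity, h] using tendsto_const_nhds

/-- If `K` has density one and `A` density zero, there are arbitrarily large
elements of `K \ A`. -/
private lemma exists_ge_mem_diff {K A : Set ℕ} (hK : NatDensity K 1) (hA : NatDensity A 0)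
    (N : ℕ) : ∃ n, N ≤ n ∧ n ∈ K ∧ n ∉ A := by
  by_contra hcon
  push_neg at hcon
  -- every element of K beyond N lies in A
  have hsub : ∀ n : ℕ, (Finset.range n).filter (fun k => k ∈ K) ⊆
      ((Finset.range n).filter (fun k => k ∈ A)) ∪ Finset.range N := by
    intro n k hk
    simp only [Finset.mem_filter, Finset.mem_range] at hk
    simp only [Finset.mem_union, Finset.mem_filter, Finset.mem_range]
    rcases lt_or_ge k N with h' | h'
    · exact Or.inr h'
    · exact Or.inl ⟨hk.1, hcon k h' hk.2⟩
  have hcard : ∀ n : ℕ,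
      ((((Finset.range n).filter (fun k => k ∈ K)).card : ℝ) / n) ≤
      ((((Finset.range n).filter (fun k => k ∈ A)).card : ℝ) / n) + (N : ℝ) / n := by
    intro n
    rw [← add_div]
    rcases Nat.eq_zero_or_pos n with rfl | hn
    · simp
    · have h1 : ((Finset.range n).filter (fun k => k ∈ K)).card ≤
          (((Finset.range n).filter (fun k => k ∈ A)) ∪ Finset.range N).card :=
        Finset.card_le_card (hsub n)
      have h2 := Finset.card_union_le ((Finset.range n).filter (fun k => k ∈ A))
        (Finset.range N)
      have h3 : ((Finset.range n).filter (fun k => k ∈ K)).card ≤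
          ((Finset.range n).filter (fun k => k ∈ A)).card + N :=
        le_trans h1 (h2.trans (by simp))
      gcongr
      exact_mod_cast h3
  have hlim : Filter.Tendsto
      (fun n : ℕ => ((((Finset.range n).filter (fun k => k ∈ A)).card : ℝ) / n) + (N : ℝ) / n)
      Filter.atTop (nhds (0 + 0)) :=
    hA.add (tendsto_const_div_atTop_nhds_zero_nat (N : ℝ))
  have := le_of_tendsto_of_tendsto' hK hlim hcard
  norm_num at this

/-- forward direction: uo-convergence implies statistical uo-convergence
(no monotonicity needed). -/
private lemma uoConv_statUOConv (x : ℕ → E) (l : E) (h : UOConv x l) : StatUOConv x l := by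
  intro u hu
  obtain ⟨p, hp, hglb, hle⟩ := h u hu
  refine ⟨p, ⟨Set.univ, natDensity_univ', fun j _ k _ hjk => hp hjk,
    by rwa [Set.image_univ]⟩, ?_⟩
  have hset : {n : ℕ | ¬ |(|x n - l| ⊓ u) - 0| ≤ p n} = (∅ : Set ℕ) := by
    ext n
    simp only [Set.mem_setOf_eq, Set.mem_empty_iff_false, iff_false, not_not, sub_zero]
    rw [abs_of_nonneg (le_inf (abs_nonneg _) hu)]
    exact hle n
  have h0 := natDensity_empty'
  rw [← hset] at h0
  exact h0

/-- backward direction, monotone case. -/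
private lemma statUOConv_uoConv_of_monotone (x : ℕ → E) (l : E) (hm : Monotone x)
    (h : StatUOConv x l) : UOConv x l := by
  -- Step 1: each x m is ≤ l
  have hle : ∀ m, x m ≤ l := by
    intro m
    set u : E := (x m - l) ⊔ 0 with hu
    have hu0 : 0 ≤ u := le_sup_right
    obtain ⟨p, ⟨K, hK1, hdec, hglb⟩, hA0⟩ := h u hu0
    have hlb : u ∈ lowerBounds (p '' K) := by
      rintro _ ⟨j, hjK, rfl⟩
      obtain ⟨n, hn, hnK, hnA⟩ := exists_ge_mem_diff hK1 hA0 (max j m)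
      have hxn : u ≤ |x n - l| := by
        apply sup_le _ (abs_nonneg _)
        exact le_trans (sub_le_sub_right (hm (le_trans (le_max_right j m) hn)) l)
          (le_abs_self _)
      have hq : |(|x n - l| ⊓ u) - 0| ≤ p n := by
        by_contra hc
        exact hnA hc
      rw [sub_zero, abs_of_nonneg (le_inf (abs_nonneg _) hu0),
        inf_eq_right.mpr hxn] at hq
      exact le_trans hq (hdec j hjK n hnK (le_trans (le_max_left j m) hn))
    have hu0' : u ≤ 0 := hglb.2 hlb
    have : x m - l ≤ 0 := le_trans le_sup_left hu0'
    exact sub_nonpos.mp this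
  -- Step 2: the sequence itself is the dominating antitone sequence
  intro u hu
  obtain ⟨p, ⟨K, hK1, hdec, hglb⟩, hA0⟩ := h u hu
  refine ⟨fun n => |x n - l| ⊓ u, ?_, ?_, fun n => le_refl _⟩
  · intro a b hab
    apply inf_le_inf_right
    rw [abs_of_nonpos (sub_nonpos.mpr (hle a)), abs_of_nonpos (sub_nonpos.mpr (hle b)),
      neg_sub, neg_sub]
    exact sub_le_sub_left (hm hab) l
  · constructor
    · rintro _ ⟨n, rfl⟩
      exact le_inf (abs_nonneg _) hu
    · intro b hb
      refine le_trans (hglb.2 ?_) le_rfl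
      rintro _ ⟨j, hjK, rfl⟩
      obtain ⟨n, hn, hnK, hnA⟩ := exists_ge_mem_diff hK1 hA0 j
      have hq : |(|x n - l| ⊓ u) - 0| ≤ p n := by
        by_contra hc
        exact hnA hc
      rw [sub_zero, abs_of_nonneg (le_inf (abs_nonneg _) hu)] at hq
      exact le_trans (hb ⟨n, rfl⟩) (le_trans hq (hdec j hjK n hnK hn))

private lemma abs_neg_eq (x : ℕ → E) (l : E) (u : E) :
    (fun n => |(-x n) - (-l)| ⊓ u) = (fun n => |x n - l| ⊓ u) := by
  funext n
  rw [show -x n - -l = l - x n by abel, abs_sub_comm]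

/-- For monotone sequences, uo-convergence and statistical uo-convergence agree. -/
theorem monotone_uo_iff_stuo (x : ℕ → E) (l : E)
    (hm : Monotone x ∨ Antitone x) :
    UOConv x l ↔ StatUOConv x l := by
  constructor
  · exact uoConv_statUOConv x l
  · intro h
    rcases hm with hmono | hanti
    · exact statUOConv_uoConv_of_monotone x l hmono h
    · have hmono' : Monotone (fun n => -x n) := fun a b hab => neg_le_neg_iff.2 (hanti hab)
      have h' : StatUOConv (fun n => -x n) (-l) := by
        intro u hu
        rw [show (fun n => |(fun n => -x n) n - (-l)| ⊓ u) = (fun n => |x n - l| ⊓ u) from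
          abs_neg_eq x l u]
        exact h u hu
      have := statUOConv_uoConv_of_monotone (fun n => -x n) (-l) hmono' h'
      intro u hu
      have h2 := this u hu
      rwa [show (fun n => |(fun n => -x n) n - (-l)| ⊓ u) = (fun n => |x n - l| ⊓ u) from
        abs_neg_eq x l u] at h2
end

section
/- If (x_n) is a statistically order bounded sequence in a Riesz space E and x_n →^{st-uo} x, then x_n is statistically order convergent to x. -/
open scoped Classical

variable {E : Type*} [Lattice E] [AddCommGroup E]
  [CovariantClass E E (· + ·) (· ≤ ·)] [Module ℝ E] [PosSMulMono ℝ E]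

lemma natDensity_zero_mono {A B : Set ℕ} (h : A ⊆ B) (hB : NatDensity B 0) :
    NatDensity A 0 := by
  refine squeeze_zero (fun n => by positivity) (fun n => ?_) hB
  rcases Nat.eq_zero_or_pos n with rfl | hn
  · simp
  · have hn' : (0:ℝ) < n := by exact_mod_cast hn
    refine div_le_div_of_nonneg_right ?_ hn'.le
    exact_mod_cast Finset.card_le_card (fun y hy => by
      simp only [Finset.mem_filter] at hy ⊢
      exact ⟨hy.1, h hy.2⟩)

lemma natDensity_zero_union {A B : Set ℕ} (hA : NatDensity A 0) (hB : NatDensity B 0) :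
    NatDensity (A ∪ B) 0 := by
  have := hA.add hB
  rw [add_zero] at this
  refine squeeze_zero (fun n => by positivity) (fun n => ?_) this
  rcases Nat.eq_zero_or_pos n with rfl | hn
  · simp
  · have hn' : (0:ℝ) < n := by exact_mod_cast hn
    rw [← add_div]
    refine div_le_div_of_nonneg_right ?_ hn'.le
    have : ((Finset.range n).filter (fun k => k ∈ A ∪ B)) ⊆
        ((Finset.range n).filter (fun k => k ∈ A)) ∪ ((Finset.range n).filter (fun k => k ∈ B)) := by
      intro y hy
      simp only [Finset.mem_filter, Finset.mem_union, Set.mem_union] at hy ⊢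
      tauto
    refine le_trans ?_ (le_of_eq (Nat.cast_add _ _))
    have key := Nat.cast_le (α := ℝ) |>.mpr ((Finset.card_le_card this).trans (Finset.card_union_le _ _))
    convert key using 4
    rfl

/-- A statistically order bounded, statistically uo-convergent sequence is
statistically order convergent (to the same limit). -/
theorem statOrderBounded_stuo_imp_stord (x : ℕ → E) (l : E)
    (hb : ∃ a b : E, NatDensity {n | ¬(a ≤ x n ∧ x n ≤ b)} 0)
    (hx : StatUOConv x l) : StatOrderConv x l := by
  obtain ⟨a, b, hab⟩ := hb
  set u : E := |a - l| ⊔ |b - l| with hu_def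
  have hu : (0:E) ≤ u := le_trans (abs_nonneg _) le_sup_left
  obtain ⟨p, hp, hpd⟩ := hx u hu
  refine ⟨p, hp, ?_⟩
  have hsub : {n | ¬ |x n - l| ≤ p n} ⊆
      {n | ¬(a ≤ x n ∧ x n ≤ b)} ∪ {n | ¬ |(|x n - l| ⊓ u) - 0| ≤ p n} := by
    intro n hn
    by_contra hc
    simp only [Set.mem_union, Set.mem_setOf_eq, not_or, not_not] at hc
    obtain ⟨⟨h1, h2⟩, h3⟩ := hc
    have hle : |x n - l| ≤ u := by
      have ha1 : x n - l ≤ u := le_trans (le_trans (sub_le_sub_right h2 l) (le_abs_self _)) le_sup_right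
      have ha2 : -(x n - l) ≤ u := by
        rw [neg_sub]
        refine le_trans ?_ (le_sup_left : |a - l| ≤ u)
        calc l - x n ≤ l - a := sub_le_sub_left h1 l
          _ = -(a - l) := (neg_sub a l).symm
          _ ≤ |a - l| := neg_le_abs _
      exact abs_le'.mpr ⟨ha1, ha2⟩
    have : |x n - l| ⊓ u = |x n - l| := inf_eq_left.mpr hle
    rw [sub_zero, abs_of_nonneg (le_inf (abs_nonneg _) hu), this] at h3
    exact hn h3
  exact natDensity_zero_mono hsub (natDensity_zero_union hab hpd)
end

section
/- For a monotone sequence (x_n) in a Banach lattice E, un-convergence to x is equivalent to st-un-convergence to x. In particular, if (x_n) is increasing and st-un-convergent to x, then x = sup_n x_n. -/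
open scoped Classical
open Filter

variable {E : Type*} [NormedAddCommGroup E] [Lattice E] [HasSolidNorm E] [IsOrderedAddMonoid E]
  [NormedSpace ℝ E]
  [PosSMulMono ℝ E] [CompleteSpace E]

/-- `x` is statistically unbounded norm convergent to `l`. -/
def StUNConv (x : ℕ → E) (l : E) : Prop :=
  ∀ ε : ℝ, 0 < ε → ∀ u : E, 0 ≤ u → NatDensity {n | ε ≤ ‖|x n - l| ⊓ u‖} 0

/-- `x` is unbounded norm convergent to `l`. -/
def UNConv (x : ℕ → E) (l : E) : Prop :=
  ∀ u : E, 0 ≤ u → Filter.Tendsto (fun n => ‖|x n - l| ⊓ u‖) Filter.atTop (nhds 0)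

/-- `x` is statistically norm convergent to `l`. -/
def StNormConv (x : ℕ → E) (l : E) : Prop :=
  ∀ ε : ℝ, 0 < ε → NatDensity {n | ε ≤ ‖x n - l‖} 0

/-- A density-zero set has arbitrarily large elements in its complement. -/
lemma natDensity_zero_exists {K : Set ℕ} (h : NatDensity K 0) (m : ℕ) :
    ∃ n, m ≤ n ∧ n ∉ K := by
  by_contra hc
  push_neg at hc
  have key : ∀ n : ℕ, ((n : ℝ) - m) / n ≤
      (((Finset.range n).filter (fun k => k ∈ K)).card : ℝ) / n := by
    intro n
    rcases Nat.eq_zero_or_pos n with rfl | hn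
    · simp
    have hn' : (0:ℝ) < n := by exact_mod_cast hn
    have hnum : ((n : ℝ) - m) ≤ (((Finset.range n).filter (fun k => k ∈ K)).card : ℝ) := by
      rcases le_or_gt m n with hmn | hmn
      · have hsub : Finset.Ico m n ⊆ (Finset.range n).filter (fun k => k ∈ K) := by
          intro k hk
          rw [Finset.mem_Ico] at hk
          simp only [Finset.mem_filter, Finset.mem_range]
          exact ⟨hk.2, hc k hk.1⟩
        have h1 := Finset.card_le_card hsub
        rw [Nat.card_Ico] at h1
        calc ((n : ℝ) - m) = ((n - m : ℕ) : ℝ) := by rw [Nat.cast_sub hmn]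
          _ ≤ _ := by exact_mod_cast h1
      · have h2 : (n : ℝ) < m := by exact_mod_cast hmn
        have : ((n : ℝ) - m) < 0 := by linarith
        exact this.le.trans (Nat.cast_nonneg _)
    gcongr
  have hone : Filter.Tendsto (fun n : ℕ => ((n : ℝ) - m) / n) Filter.atTop (nhds 1) := by
    have h1 : Filter.Tendsto (fun n : ℕ => 1 - (m : ℝ) / n) Filter.atTop (nhds 1) := by
      simpa using tendsto_const_nhds.sub (tendsto_const_div_atTop_nhds_zero_nat (m : ℝ))
    apply h1.congr'
    filter_upwards [Filter.eventually_ge_atTop 1] with n hn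
    have hn' : (n : ℝ) ≠ 0 := by positivity
    field_simp
  have : (1:ℝ) ≤ 0 := le_of_tendsto_of_tendsto' hone h key
  linarith

/-- A finite set has density zero. -/
lemma natDensity_zero_of_finite {K : Set ℕ} (h : K.Finite) : NatDensity K 0 := by
  have hub : ∀ n : ℕ, (((Finset.range n).filter (fun k => k ∈ K)).card : ℝ) / n ≤
      (h.toFinset.card : ℝ) / n := by
    intro n
    rcases Nat.eq_zero_or_pos n with rfl | hn
    · simp
    have hn' : (0:ℝ) < n := by exact_mod_cast hn
    have hsub : (Finset.range n).filter (fun k => k ∈ K) ⊆ h.toFinset := by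
      intro k hk
      simp only [Finset.mem_filter] at hk
      simpa using hk.2
    rw [div_le_div_iff_of_pos_right hn']
    exact_mod_cast Finset.card_le_card hsub
  have hlow : ∀ n : ℕ, (0:ℝ) ≤ (((Finset.range n).filter (fun k => k ∈ K)).card : ℝ) / n :=
    fun n => by positivity
  exact tendsto_of_tendsto_of_tendsto_of_le_of_le tendsto_const_nhds
    (tendsto_const_div_atTop_nhds_zero_nat (h.toFinset.card : ℝ)) hlow hub

lemma stun_exists {x : ℕ → E} {l : E} (hx : StUNConv x l) {ε : ℝ} (hε : 0 < ε) {u : E}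
    (hu : 0 ≤ u) (m : ℕ) : ∃ n, m ≤ n ∧ ‖|x n - l| ⊓ u‖ < ε := by
  obtain ⟨n, hmn, hn⟩ := natDensity_zero_exists (hx ε hε u hu) m
  exact ⟨n, hmn, lt_of_not_ge (by simpa using hn)⟩

lemma norm_eq_zero_of_forall_lt {v : E} (h : ∀ ε : ℝ, 0 < ε → ‖v‖ < ε) : v = 0 := by
  rw [← norm_eq_zero]
  by_contra hne
  have hp : 0 < ‖v‖ := lt_of_le_of_ne (norm_nonneg v) (Ne.symm hne)
  exact absurd (h ‖v‖ hp) (lt_irrefl _)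

lemma stun_isLUB {x : ℕ → E} {l : E} (hm : Monotone x) (hx : StUNConv x l) :
    IsLUB (Set.range x) l := by
  have hub : ∀ m, x m ≤ l := by
    intro m
    set v := (x m - l) ⊔ 0 with hv
    have hv0 : (0:E) ≤ v := le_sup_right
    have hvz : v = 0 := by
      apply norm_eq_zero_of_forall_lt
      intro ε hε
      obtain ⟨n, hmn, hn⟩ := stun_exists hx hε hv0 m
      have h1 : v ≤ |x n - l| := by
        refine le_trans (sup_le_sup_right (sub_le_sub_right (hm hmn) l) 0) ?_
        exact sup_le (le_abs_self _) (abs_nonneg _)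
      rwa [inf_eq_right.2 h1] at hn
    exact sub_nonpos.1 (le_trans le_sup_left hvz.le)
  constructor
  · rintro _ ⟨m, rfl⟩
    exact hub m
  · intro b hb
    set v := (l - b) ⊔ 0 with hv
    have hv0 : (0:E) ≤ v := le_sup_right
    have hvz : v = 0 := by
      apply norm_eq_zero_of_forall_lt
      intro ε hε
      obtain ⟨n, _, hn⟩ := stun_exists hx hε hv0 0
      have hxb : x n ≤ b := hb (Set.mem_range_self n)
      have habs : |x n - l| = l - x n := by
        rw [abs_of_nonpos (sub_nonpos.2 (hub n)), neg_sub]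
      have h1 : v ≤ |x n - l| := by
        rw [habs]
        exact sup_le (sub_le_sub_left hxb l) (sub_nonneg.2 (hub n))
      rwa [inf_eq_right.2 h1] at hn
    exact sub_nonpos.1 (le_trans le_sup_left hvz.le)

lemma un_to_stun {x : ℕ → E} {l : E} (hx : UNConv x l) : StUNConv x l := by
  intro ε hε u hu
  apply natDensity_zero_of_finite
  obtain ⟨N, hN⟩ := Filter.eventually_atTop.1 ((hx u hu).eventually_lt_const hε)
  apply Set.Finite.subset (Set.finite_Iio N)
  intro n hn
  simp only [Set.mem_setOf_eq] at hn
  by_contra hc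
  exact absurd (hN n (not_lt.1 (by simpa using hc))) (not_lt.2 hn)

lemma stun_to_un_mono {x : ℕ → E} {l : E} (hm : Monotone x) (hx : StUNConv x l) :
    UNConv x l := by
  have hlub := stun_isLUB hm hx
  intro u hu
  have habs : ∀ n, |x n - l| = l - x n := fun n => by
    rw [abs_of_nonpos (sub_nonpos.2 (hlub.1 (Set.mem_range_self n))), neg_sub]
  rw [Metric.tendsto_atTop]
  intro ε hε
  obtain ⟨n₀, _, hn₀⟩ := stun_exists hx hε hu 0
  refine ⟨n₀, fun n hn => ?_⟩
  have hle : ‖|x n - l| ⊓ u‖ ≤ ‖|x n₀ - l| ⊓ u‖ := by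
    apply norm_le_norm_of_abs_le_abs
    have h1 : (0:E) ≤ |x n - l| ⊓ u := le_inf (abs_nonneg _) hu
    have h2 : (0:E) ≤ |x n₀ - l| ⊓ u := le_inf (abs_nonneg _) hu
    rw [abs_of_nonneg h1, abs_of_nonneg h2, habs, habs]
    exact inf_le_inf_right u (sub_le_sub_left (hm hn) l)
  have : dist ‖|x n - l| ⊓ u‖ 0 = ‖|x n - l| ⊓ u‖ := by
    rw [Real.dist_eq, sub_zero, abs_of_nonneg (norm_nonneg _)]
  rw [this]
  exact lt_of_le_of_lt hle hn₀

lemma un_neg {x : ℕ → E} {l : E} (h : UNConv x l) : UNConv (fun n => -x n) (-l) := by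
  intro u hu
  have := h u hu
  apply this.congr
  intro n
  congr 2
  rw [show -x n - -l = -(x n - l) by abel, abs_neg]

lemma stun_neg {x : ℕ → E} {l : E} (h : StUNConv x l) : StUNConv (fun n => -x n) (-l) := by
  intro ε hε u hu
  have := h ε hε u hu
  convert this using 3
  rw [show -x _ - -l = -(x _ - l) by abel, abs_neg]

/-- For monotone sequences, un-convergence and st-un-convergence agree; in particular
an increasing st-un-convergent sequence converges to its supremum. -/
theorem monotone_un_iff_stun (x : ℕ → E) (l : E) :
    ((Monotone x ∨ Antitone x) → (UNConv x l ↔ StUNConv x l)) ∧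
      (Monotone x → StUNConv x l → IsLUB (Set.range x) l) := by
  constructor
  · rintro (hmono | hanti)
    · exact ⟨fun h => un_to_stun h, fun h => stun_to_un_mono hmono h⟩
    · refine ⟨fun h => un_to_stun h, fun hst => ?_⟩
      have hmono : Monotone (fun n => -x n) := fun a b h => neg_le_neg (hanti h)
      have h2 := un_neg (stun_to_un_mono hmono (stun_neg hst))
      intro u hu
      apply (h2 u hu).congr
      intro n
      simp only [neg_neg]
  · exact fun hmono hst => stun_isLUB hmono hst
end

section
/- In a Banach lattice E with a strong order unit e, a sequence is statistically norm convergent to x if and only if it is statistically unbounded norm convergent to x. -/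
open scoped Classical

variable {E : Type*} [NormedAddCommGroup E] [Lattice E] [HasSolidNorm E] [IsOrderedAddMonoid E]
  [NormedSpace ℝ E]
  [PosSMulMono ℝ E] [CompleteSpace E]

/-- Density-zero sets are downward closed under inclusion. -/
lemma natDensity_zero_mono_s14 {K J : Set ℕ} (h : J ⊆ K) (hK : NatDensity K 0) :
    NatDensity J 0 := by
  refine squeeze_zero (fun n => by positivity) (fun n => ?_) hK
  rcases Nat.eq_zero_or_pos n with rfl | hn
  · simp
  · refine div_le_div_of_nonneg_right ?_ (by positivity)
    exact_mod_cast Finset.card_le_card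
      (Finset.monotone_filter_right _ (fun k _ hk => h hk))

/-- smul by a positive scalar commutes with inf. -/
lemma smul_inf_pos {c : ℝ} (hc : 0 < c) (a b : E) :
    c • (a ⊓ b) = (c • a) ⊓ (c • b) := by
  refine le_antisymm (le_inf (smul_le_smul_of_nonneg_left inf_le_left hc.le)
    (smul_le_smul_of_nonneg_left inf_le_right hc.le)) ?_
  have h1 : c⁻¹ • ((c • a) ⊓ (c • b)) ≤ a ⊓ b := by
    refine le_inf ?_ ?_
    · calc c⁻¹ • ((c • a) ⊓ (c • b)) ≤ c⁻¹ • (c • a) :=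
        smul_le_smul_of_nonneg_left inf_le_left (by positivity)
      _ = a := inv_smul_smul₀ hc.ne' a
    · calc c⁻¹ • ((c • a) ⊓ (c • b)) ≤ c⁻¹ • (c • b) :=
        smul_le_smul_of_nonneg_left inf_le_right (by positivity)
      _ = b := inv_smul_smul₀ hc.ne' b
  calc (c • a) ⊓ (c • b) = c • (c⁻¹ • ((c • a) ⊓ (c • b))) :=
    (smul_inv_smul₀ hc.ne' _).symm
  _ ≤ c • (a ⊓ b) := smul_le_smul_of_nonneg_left h1 hc.le

/-- smul by a positive scalar commutes with sup. -/
lemma smul_sup_pos {c : ℝ} (hc : 0 < c) (a b : E) :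
    c • (a ⊔ b) = (c • a) ⊔ (c • b) := by
  refine le_antisymm ?_ (sup_le (smul_le_smul_of_nonneg_left le_sup_left hc.le)
    (smul_le_smul_of_nonneg_left le_sup_right hc.le))
  have h1 : a ⊔ b ≤ c⁻¹ • ((c • a) ⊔ (c • b)) := by
    refine sup_le ?_ ?_
    · calc a = c⁻¹ • (c • a) := (inv_smul_smul₀ hc.ne' a).symm
      _ ≤ c⁻¹ • ((c • a) ⊔ (c • b)) :=
        smul_le_smul_of_nonneg_left le_sup_left (by positivity)
    · calc b = c⁻¹ • (c • b) := (inv_smul_smul₀ hc.ne' b).symm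
      _ ≤ c⁻¹ • ((c • a) ⊔ (c • b)) :=
        smul_le_smul_of_nonneg_left le_sup_right (by positivity)
  calc c • (a ⊔ b) ≤ c • (c⁻¹ • ((c • a) ⊔ (c • b))) :=
    smul_le_smul_of_nonneg_left h1 hc.le
  _ = (c • a) ⊔ (c • b) := smul_inv_smul₀ hc.ne' _

lemma abs_smul_pos {c : ℝ} (hc : 0 < c) (z : E) : |c • z| = c • |z| := by
  have h1 : |c • z| = (c • z) ⊔ (-(c • z)) := rfl
  have h2 : |z| = z ⊔ (-z) := rfl
  rw [h1, h2, smul_sup_pos hc, smul_neg]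

/-- Uniform strong-unit bound via Baire category. -/
lemma smul_le_smul_right_of_le {c d : ℝ} {v : E} (h : c ≤ d) (hv : 0 ≤ v) :
    c • v ≤ d • v := by
  have h1 : 0 ≤ (d - c) • v := smul_nonneg (by linarith) hv
  rw [sub_smul] at h1
  exact sub_nonneg.mp h1

lemma unit_nonneg (e : E) (he : ∀ z : E, ∃ c : ℝ, 0 < c ∧ |z| ≤ c • e) : 0 ≤ e := by
  obtain ⟨c, hc, h0⟩ := he 0
  rw [abs_zero] at h0
  have := smul_le_smul_of_nonneg_left h0 (le_of_lt (inv_pos.mpr hc))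
  rwa [smul_zero, inv_smul_smul₀ hc.ne'] at this

lemma uniform_bound (e : E) (he : ∀ z : E, ∃ c : ℝ, 0 < c ∧ |z| ≤ c • e) :
    ∃ C : ℝ, 0 < C ∧ ∀ z : E, |z| ≤ (C * ‖z‖) • e := by
  have he0 : 0 ≤ e := unit_nonneg e he
  -- Baire category
  have hclosed : ∀ n : ℕ, IsClosed {z : E | |z| ≤ (n : ℝ) • e} := by
    intro n
    have hcont : Continuous fun z : E => |z| := continuous_id.sup continuous_neg
    exact isClosed_le hcont continuous_const
  have hcov : (⋃ n : ℕ, {z : E | |z| ≤ (n : ℝ) • e}) = Set.univ := by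
    ext z
    simp only [Set.mem_iUnion, Set.mem_setOf_eq, Set.mem_univ, iff_true]
    obtain ⟨c, hc, hce⟩ := he z
    exact ⟨⌈c⌉₊, hce.trans (smul_le_smul_right_of_le (Nat.le_ceil c) he0)⟩
  obtain ⟨n, z₀, hz₀⟩ := nonempty_interior_of_iUnion_of_closed hclosed hcov
  obtain ⟨r, hr, hball⟩ := Metric.isOpen_iff.mp isOpen_interior z₀ hz₀
  have hball' : Metric.ball z₀ r ⊆ {z : E | |z| ≤ (n : ℝ) • e} :=
    hball.trans interior_subset
  -- every w with ‖w‖ < r satisfies |w| ≤ 2n • e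
  have hsmall : ∀ w : E, ‖w‖ < r → |w| ≤ ((2 * n : ℝ)) • e := by
    intro w hw
    have h1 : z₀ + w ∈ Metric.ball z₀ r := by
      simp [Metric.mem_ball, dist_eq_norm, hw]
    have h2 : |z₀ + w| ≤ (n : ℝ) • e := hball' h1
    have h3 : |z₀| ≤ (n : ℝ) • e := hball' (Metric.mem_ball_self hr)
    have h4 : |w| ≤ |z₀ + w| + |z₀| := by
      have hw' : w = (z₀ + w) + (-z₀) := by abel
      calc |w| = |(z₀ + w) + (-z₀)| := by rw [← hw']
      _ ≤ |z₀ + w| + |(-z₀)| := abs_add_le _ _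
      _ = |z₀ + w| + |z₀| := by rw [abs_neg]
    calc |w| ≤ |z₀ + w| + |z₀| := h4
    _ ≤ (n : ℝ) • e + (n : ℝ) • e := add_le_add h2 h3
    _ = (2 * n : ℝ) • e := by rw [two_mul, add_smul]
  refine ⟨4 * n / r + 1, by positivity, fun z => ?_⟩
  rcases eq_or_ne z 0 with rfl | hz
  · simp
  · have hzn : 0 < ‖z‖ := norm_pos_iff.mpr hz
    set t : ℝ := r / (2 * ‖z‖) with ht
    have htpos : 0 < t := by positivity
    have hwnorm : ‖t • z‖ < r := by
      rw [norm_smul, Real.norm_eq_abs, abs_of_pos htpos, ht]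
      have h5 : r / (2 * ‖z‖) * ‖z‖ = r / 2 := by
        field_simp
      rw [h5]; linarith
    have hw := hsmall (t • z) hwnorm
    rw [abs_smul_pos htpos] at hw
    have h6 := smul_le_smul_of_nonneg_left hw (le_of_lt (inv_pos.mpr htpos))
    rw [inv_smul_smul₀ htpos.ne', smul_smul] at h6
    refine h6.trans (smul_le_smul_right_of_le ?_ he0)
    have h7 : t⁻¹ = 2 * ‖z‖ / r := by
      rw [ht]; field_simp
    rw [h7]
    have h8 : 2 * ‖z‖ / r * (2 * n) = 4 * n / r * ‖z‖ := by
      field_simp; ring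
    rw [h8]
    nlinarith [hzn.le, hr.le, Nat.cast_nonneg (α := ℝ) n]

lemma key_bound (e : E) (he : ∀ z : E, ∃ c : ℝ, 0 < c ∧ |z| ≤ c • e) {ε : ℝ} (hε : 0 < ε) :
    ∃ δ : ℝ, 0 < δ ∧ ∀ z : E, ε ≤ ‖z‖ → δ ≤ ‖|z| ⊓ e‖ := by
  obtain ⟨C, hC, hCb⟩ := uniform_bound e he
  have he0 := unit_nonneg e he
  set c : ℝ := C * ε + 1 with hc
  have hc1 : 1 ≤ c := by nlinarith
  have hcpos : 0 < c := by linarith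
  refine ⟨ε / c, by positivity, fun z hz => ?_⟩
  have hzn : 0 < ‖z‖ := lt_of_lt_of_le hε hz
  set s : ℝ := ε / ‖z‖ with hs
  have hspos : 0 < s := by positivity
  have hs1 : s ≤ 1 := by
    rw [hs, div_le_one hzn]; exact hz
  set z' := s • z with hz'
  have hz'n : ‖z'‖ = ε := by
    rw [hz', norm_smul, Real.norm_eq_abs, abs_of_pos hspos, hs]
    field_simp
  have habs : |z'| = s • |z| := abs_smul_pos hspos z
  have h1 : |z'| ≤ c • e := by
    have h1' := hCb z'
    rw [hz'n] at h1'
    exact h1'.trans (smul_le_smul_right_of_le (by nlinarith) he0)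
  have h0' : (0:E) ≤ |z'| := abs_nonneg _
  have h2 : |z'| ≤ c • |z'| := by
    have h2' := smul_le_smul_right_of_le hc1 h0'
    rwa [one_smul] at h2'
  have h3 : |z'| ≤ c • (|z'| ⊓ e) := by
    rw [smul_inf_pos hcpos]
    exact le_inf h2 h1
  have hin : (0:E) ≤ |z'| ⊓ e := le_inf h0' he0
  have h4 : ‖z'‖ ≤ c * ‖|z'| ⊓ e‖ := by
    have h4' : ‖z'‖ ≤ ‖c • (|z'| ⊓ e)‖ := by
      apply norm_le_norm_of_abs_le_abs
      calc |z'| ≤ c • (|z'| ⊓ e) := h3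
      _ = |c • (|z'| ⊓ e)| := (abs_of_nonneg (smul_nonneg hcpos.le hin)).symm
    have hns : ‖c • (|z'| ⊓ e)‖ = c * ‖|z'| ⊓ e‖ := by
      rw [norm_smul, Real.norm_eq_abs, abs_of_pos hcpos]
    rwa [hns] at h4'
  rw [hz'n] at h4
  have h5 : ε / c ≤ ‖|z'| ⊓ e‖ := (div_le_iff₀' hcpos).mpr h4
  refine h5.trans ?_
  apply norm_le_norm_of_abs_le_abs
  have hle : |z'| ≤ |z| := by
    rw [habs]
    have := smul_le_smul_right_of_le hs1 (abs_nonneg z)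
    rwa [one_smul] at this
  calc |(|z'| ⊓ e)| = |z'| ⊓ e := abs_of_nonneg hin
  _ ≤ |z| ⊓ e := inf_le_inf_right e hle
  _ = |(|z| ⊓ e)| := (abs_of_nonneg (le_inf (abs_nonneg z) he0)).symm

/-- In a Banach lattice with a strong order unit, statistical norm convergence and
statistical unbounded norm convergence coincide. -/
theorem strong_unit_stnorm_iff_stun (e : E)
    (he : ∀ z : E, ∃ c : ℝ, 0 < c ∧ |z| ≤ c • e)
    (x : ℕ → E) (l : E) :
    StNormConv x l ↔ StUNConv x l := by
  constructor
  · intro h ε hε u hu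
    refine natDensity_zero_mono_s14 ?_ (h ε hε)
    intro n hn
    simp only [Set.mem_setOf_eq] at hn ⊢
    refine hn.trans ?_
    apply norm_le_norm_of_abs_le_abs
    have h0 : (0:E) ≤ |x n - l| ⊓ u := le_inf (abs_nonneg _) hu
    calc |(|x n - l| ⊓ u)| = |x n - l| ⊓ u := abs_of_nonneg h0
    _ ≤ |x n - l| := inf_le_left
    _ = |(x n - l)| := rfl
  · intro h ε hε
    obtain ⟨δ, hδ, hkey⟩ := key_bound e he hε
    refine natDensity_zero_mono_s14 ?_ (h δ hδ e (unit_nonneg e he))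
    intro n hn
    exact hkey _ hn
end
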